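/- arXiv:1401.4759 — 2 statements merged into one kernel-verified Lean document; each statement's English description precedes it below -/
import Mathlib

section
/- Let k > 1 and let M be a closed manifold with a rank-k real vector bundle ξ over M. If the mod-2 cohomology ring H*(P(ξ); ℤ/2) is isomorphic as a graded H*(M)-algebra to H*(M × ℝP^(k-1); ℤ/2), where H*(P(ξ)) ≅ H*(M)[x]/(Σ_{i=0}^{k} w_i(ξ) x^(k-i)) with x of degree 1, then there exists X ∈ H^1(M; ℤ/2) such that the total Stiefel-Whitney class satisfies w(ξ) = (1+X)^k. -/
/-!
If `ε = 0`, the surjection `e` would put the root `x` of `p` in the image of `R`, impossible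
for a monic `p` of degree `k ≥ 2`. If `ε = 1`, then `e⁻¹ x = a - r`, so `X ^ k` divides
`p(X - r)`; the latter is monic of degree `k`, hence equals `X ^ k`, so `p = (X + r) ^ k` and
comparing coefficients gives `w i = C(k, i) r ^ i` (signs disappear in characteristic two).
-/

lemma neg_eq_self_of_zmod_two {R : Type*} [Ring R] [Algebra (ZMod 2) R] (x : R) : -x = x := by
  calc -x = (-1 : ZMod 2) • x := by rw [neg_smul, one_smul]
    _ = x := by rw [ZMod.neg_eq_self_mod_two, one_smul]

namespace Polynomial

variable {R : Type*} [CommRing R]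

lemma degree_sum_C_mul_X_pow_sub_lt (w : ℕ → R) (k : ℕ) :
    (∑ i ∈ Finset.Icc 1 k, C (w i) * X ^ (k - i)).degree < (k : WithBot ℕ) := by
  refine (degree_sum_le _ _).trans_lt ((Finset.sup_lt_iff (by simp)).2 ?_)
  intro i hi
  rw [Finset.mem_Icc] at hi
  exact (degree_C_mul_X_pow_le _ _).trans_lt (Nat.cast_lt.2 (by omega))

lemma monic_X_pow_sub_sum (w : ℕ → R) (k : ℕ) :
    (X ^ k - ∑ i ∈ Finset.Icc 1 k, C (w i) * X ^ (k - i)).Monic :=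
  monic_X_pow_sub (degree_sum_C_mul_X_pow_sub_lt w k)

lemma natDegree_X_pow_sub_sum [Nontrivial R] (w : ℕ → R) (k : ℕ) :
    (X ^ k - ∑ i ∈ Finset.Icc 1 k, C (w i) * X ^ (k - i)).natDegree = k := by
  refine natDegree_eq_of_degree_eq_some ?_
  rw [degree_sub_eq_left_of_degree_lt (by simpa using degree_sum_C_mul_X_pow_sub_lt w k),
    degree_X_pow]

lemma coeff_X_pow_sub_sum (w : ℕ → R) {k i : ℕ} (hi : 1 ≤ i) (hik : i ≤ k) :
    (X ^ k - ∑ j ∈ Finset.Icc 1 k, C (w j) * X ^ (k - j)).coeff (k - i) = -w i := by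
  rw [coeff_sub, coeff_X_pow, if_neg (by omega), finsetSum_coeff,
    Finset.sum_eq_single_of_mem i (Finset.mem_Icc.2 ⟨hi, hik⟩)]
  · simp
  · intro j hj hji
    rw [Finset.mem_Icc] at hj
    rw [coeff_C_mul_X_pow, if_neg (by omega)]

lemma eq_X_add_C_pow_of_X_pow_dvd_comp [Nontrivial R] {p : R[X]} {k : ℕ} (hp : p.Monic)
    (hpk : p.natDegree = k) (r : R) (hdvd : X ^ k ∣ p.comp (X - C r)) : p = (X + C r) ^ k := by
  have htaylor : taylor (-r) p = p.comp (X - C r) := by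
    rw [taylor_apply, C_neg, ← sub_eq_add_neg]
  have hX : taylor (-r) p = X ^ k := by
    refine eq_of_monic_of_dvd_of_natDegree_le (monic_X_pow k) ?_ (htaylor ▸ hdvd) ?_
    · rw [taylor_apply]
      exact hp.comp_X_add_C (-r)
    · rw [natDegree_taylor, hpk, natDegree_X_pow]
  calc p = taylor r (taylor (-r) p) := by rw [taylor_taylor, add_neg_cancel, taylor_zero]
    _ = (X + C r) ^ k := by rw [hX, taylor_X_pow]

end Polynomial

section

open Polynomial

namespace AdjoinRoot

variable {R S : Type*} [CommRing R] [CommRing S] [Algebra R S]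

lemma algHom_mk {q : R[X]} (f : AdjoinRoot q →ₐ[R] S) (s : R[X]) :
    f (mk q s) = aeval (f (root q)) s := by
  rw [← aeval_eq, aeval_algHom_apply]

lemma dvd_comp_of_algHom_root_eq_mk {p q : R[X]} (f : AdjoinRoot p →ₐ[R] AdjoinRoot q) (s : R[X])
    (hf : f (root p) = mk q s) : q ∣ p.comp s := by
  rw [← mk_eq_zero, ← aeval_eq, aeval_comp, aeval_eq, ← hf, ← algHom_mk, mk_self, map_zero]

lemma natDegree_le_one_of_root_eq_algebraMap [Nontrivial R] {p : R[X]} (hp : p.Monic) {c : R}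
    (h : root p = algebraMap R (AdjoinRoot p) c) : p.natDegree ≤ 1 := by
  have hdvd : p ∣ X - C c := by
    rw [← mk_eq_zero, map_sub, mk_X, mk_C, ← algebraMap_eq, h, sub_self]
  by_contra! hlt
  exact hp.not_dvd_of_natDegree_lt (X_sub_C_ne_zero c) (by rwa [natDegree_X_sub_C]) hdvd

lemma natDegree_le_one_of_surjective_of_root_eq_algebraMap [Nontrivial R] {p q : R[X]}
    (hp : p.Monic) (f : AdjoinRoot q →ₐ[R] AdjoinRoot p) (hf : Function.Surjective f) {c : R}
    (hc : f (root q) = algebraMap R (AdjoinRoot p) c) : p.natDegree ≤ 1 := by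
  obtain ⟨s, hs⟩ := hf (root p)
  obtain ⟨s, rfl⟩ := mk_surjective s
  rw [algHom_mk, hc, aeval_algebraMap_apply_eq_algebraMap_eval] at hs
  exact natDegree_le_one_of_root_eq_algebraMap hp hs.symm

end AdjoinRoot

end

open Polynomial in
theorem stmt_6_general {R : Type} [CommRing R] [Algebra (ZMod 2) R]
    (𝒜 : ℕ → Submodule (ZMod 2) R)
    (k : ℕ) (hk : 1 < k) (w : ℕ → R)
    (p : Polynomial R)
    (hp : p = X ^ k - ∑ i ∈ Finset.Icc 1 k, C (w i) * X ^ (k - i))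
    (e : AdjoinRoot ((X : Polynomial R) ^ k) ≃ₐ[R] AdjoinRoot p)
    (he : ∃ r ∈ 𝒜 1, ∃ ε : R, (ε = 0 ∨ ε = 1) ∧
      e (AdjoinRoot.root ((X : Polynomial R) ^ k))
        = algebraMap R (AdjoinRoot p) r + ε • AdjoinRoot.root p) :
    ∃ Y ∈ 𝒜 1, ∀ i, 1 ≤ i → i ≤ k → w i = (k.choose i : R) * Y ^ i := by
  rcases subsingleton_or_nontrivial R with _ | _
  · exact ⟨0, zero_mem _, fun _ _ _ => Subsingleton.elim _ _⟩
  obtain ⟨r, hr, ε, hε, he⟩ := he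
  have hpm : p.Monic := hp ▸ monic_X_pow_sub_sum w k
  have hpk : p.natDegree = k := hp ▸ natDegree_X_pow_sub_sum w k
  obtain rfl | rfl := hε
  · rw [zero_smul, add_zero] at he
    have := AdjoinRoot.natDegree_le_one_of_surjective_of_root_eq_algebraMap hpm e.toAlgHom
      e.surjective he
    omega
  rw [one_smul] at he
  have hroot : e.symm (AdjoinRoot.root p) = AdjoinRoot.mk _ (X - C r) := by
    rw [e.symm_apply_eq, map_sub, AdjoinRoot.mk_X, AdjoinRoot.mk_C, map_sub, he,
      ← AdjoinRoot.algebraMap_eq, AlgEquiv.commutes, add_sub_cancel_left]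
  have hpow : p = (X + C r) ^ k := eq_X_add_C_pow_of_X_pow_dvd_comp hpm hpk r
    (AdjoinRoot.dvd_comp_of_algHom_root_eq_mk e.symm.toAlgHom _ hroot)
  refine ⟨r, hr, fun i hi hik => ?_⟩
  have hcoeff := congrArg (coeff · (k - i)) hpow
  simp only [hp, coeff_X_pow_sub_sum w hi hik, coeff_X_add_C_pow,
    Nat.sub_sub_self hik, Nat.choose_symm hik] at hcoeff
  rw [← neg_eq_self_of_zmod_two (w i), hcoeff, mul_comm]

open Polynomial in
/-- Algebraic form of Proposition 3.1 (⇒): let `R = H*(M)` be a graded `ℤ/2`-algebra,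
`w i ∈ 𝒜 i` the Stiefel–Whitney classes of a rank-`k` bundle (`k > 1`), and model
`H*(P(ξ)) = R[x]/(x^k - Σ_{i=1}^k w_i x^(k-i))` (Borel–Hirzebruch) and
`H*(M × ℝP^(k-1)) = R[a]/(a^k)`.  If there is a degree-respecting `R`-algebra
isomorphism (so the degree-one generator `a` is sent to `r + ε·x` with `r` of degree
one), then `w(ξ) = (1+X)^k` for some degree-one `X ∈ R`, i.e. `w i = C(k,i)·X^i`. -/
theorem stmt_6 {R : Type} [CommRing R] [Algebra (ZMod 2) R]
    (𝒜 : ℕ → Submodule (ZMod 2) R) [GradedRing 𝒜]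
    (k : ℕ) (hk : 1 < k) (w : ℕ → R) (hw : ∀ i, w i ∈ 𝒜 i)
    (p : Polynomial R)
    (hp : p = X ^ k - ∑ i ∈ Finset.Icc 1 k, C (w i) * X ^ (k - i))
    (e : AdjoinRoot ((X : Polynomial R) ^ k) ≃ₐ[R] AdjoinRoot p)
    (he : ∃ r ∈ 𝒜 1, ∃ ε : R, (ε = 0 ∨ ε = 1) ∧
      e (AdjoinRoot.root ((X : Polynomial R) ^ k))
        = algebraMap R (AdjoinRoot p) r + ε • AdjoinRoot.root p) :
    ∃ Y ∈ 𝒜 1, ∀ i, 1 ≤ i → i ≤ k → w i = (k.choose i : R) * Y ^ i :=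
  stmt_6_general 𝒜 k hk w p hp e he
end

section
/- Let Λ be an n × l matrix over ℤ/2ℤ giving a characteristic matrix (I_n | Λ) of a small cover over a simple polytope P^n with m = n + l facets, and let Λ_ξ be a (k-1) × l matrix over ℤ/2ℤ. Then the (n+k-1) × (m+k) matrix [[I_n, 0, Λ, 0], [0, I_{k-1}, Λ_ξ, 1]] (where 1 denotes the all-ones column of length k-1) satisfies the nonsingularity condition (⋆) on the product polytope P^n × Δ^(k-1): for every vertex of P^n × Δ^(k-1), the corresponding n + k - 1 column vectors are linearly independent over ℤ/2ℤ, provided (I_n | Λ) satisfies condition (⋆) on P^n. -/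
/-- Proposition 4.3: if the characteristic matrix `(I_n | Λ)` (with columns `lam i`,
augmented by rows `mu i` coming from `Λ_ξ` and `0`) satisfies condition `(⋆)` on `P^n`,
then the characteristic matrix `[[I_n, 0, Λ, 0], [0, I_{k-1}, Λ_ξ, 1]]` of the
projectivization satisfies `(⋆)` on `P^n × Δ^(k-1)`: for every vertex of `P^n`
(a set `S` of `n` facets with `lam|_S` linearly independent) and every omitted facet
`j` of `Δ^(k-1)`, the corresponding `n + k - 1` columns are linearly independent over
`ℤ/2ℤ`. -/
theorem stmt_16 (n k m : ℕ) (hk : 1 ≤ k)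
    (lam : Fin m → Fin n → ZMod 2) (mu : Fin m → Fin (k - 1) → ZMod 2)
    (hmu : ∀ i : Fin m, (i : ℕ) < n → mu i = 0)
    (S : Finset (Fin m)) (hcard : S.card = n)
    (hS : LinearIndependent (ZMod 2) (fun i : S => lam i))
    (j : Fin k) :
    LinearIndependent (ZMod 2)
      (fun v : (S ⊕ {j' : Fin k // j' ≠ j}) =>
        (match v with
          | Sum.inl i => (lam i, mu i)
          | Sum.inr j' => (0, fun t => if (j'.1 : ℕ) = k - 1 then 1
              else if (j'.1 : ℕ) = (t : ℕ) then 1 else 0) :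
          (Fin n → ZMod 2) × (Fin (k - 1) → ZMod 2))) := by
  classical
  rw [Fintype.linearIndependent_iff]
  intro g hg
  set w : {j' : Fin k // j' ≠ j} → Fin (k-1) → ZMod 2 :=
    fun j' t => if (j'.1 : ℕ) = k - 1 then 1 else if (j'.1 : ℕ) = (t : ℕ) then 1 else 0 with hw
  have hg' : (∑ i : S, g (Sum.inl i) • (lam i, mu i))
      + (∑ j' : {j' : Fin k // j' ≠ j}, g (Sum.inr j') • ((0, w j') :
        (Fin n → ZMod 2) × (Fin (k-1) → ZMod 2))) = 0 := by
    rw [Fintype.sum_sum_type] at hg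
    exact hg
  have hg1 : (∑ i : S, g (Sum.inl i) • lam i) = 0 := by
    have := congrArg Prod.fst hg'
    simpa [Prod.fst_sum] using this
  have hzero : ∀ i : S, g (Sum.inl i) = 0 :=
    Fintype.linearIndependent_iff.mp hS _ hg1
  have hg2 : (∑ j' : {j' : Fin k // j' ≠ j}, g (Sum.inr j') • w j') = 0 := by
    have := congrArg Prod.snd hg'
    simpa [Prod.snd_sum, hzero] using this
  have heval : ∀ t : Fin (k-1),
      (∑ j' : {j' : Fin k // j' ≠ j}, g (Sum.inr j') * w j' t) = 0 := by
    intro t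
    have := congrFun hg2 t
    simpa [Finset.sum_apply] using this
  have hlast : ∀ jl : {j' : Fin k // j' ≠ j}, ((jl.1 : ℕ) = k - 1) → g (Sum.inr jl) = 0 := by
    intro jl hjl
    have hjne : (j : ℕ) ≠ k - 1 := by
      intro h
      exact jl.2 (Fin.ext (hjl.trans h.symm))
    have hjlt : (j : ℕ) < k - 1 := by
      have := j.isLt; omega
    have h0 := heval ⟨(j : ℕ), hjlt⟩
    rw [Fintype.sum_eq_single jl (fun x hx => ?_)] at h0
    · simpa [hw, hjl] using h0
    · have hx1 : (x.1 : ℕ) ≠ k - 1 := fun h => hx (Subtype.ext (Fin.ext (h.trans hjl.symm)))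
      have hx2 : (x.1 : ℕ) ≠ (j : ℕ) := fun h => x.2 (Fin.ext h)
      simp [hw, hx1, hx2]
  have hrest : ∀ j0 : {j' : Fin k // j' ≠ j}, ((j0.1 : ℕ) ≠ k - 1) → g (Sum.inr j0) = 0 := by
    intro j0 hj0
    have hj0lt : (j0.1 : ℕ) < k - 1 := by
      have := j0.1.isLt; omega
    have h0 := heval ⟨(j0.1 : ℕ), hj0lt⟩
    rw [Fintype.sum_eq_single j0 (fun x hx => ?_)] at h0
    · simpa [hw, hj0] using h0
    · by_cases hx1 : (x.1 : ℕ) = k - 1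
      · simp [hw, hx1, hlast x hx1]
      · have hx2 : (x.1 : ℕ) ≠ (j0.1 : ℕ) := fun h => hx (Subtype.ext (Fin.ext h))
        simp [hw, hx1, hx2]
  intro v
  match v with
  | Sum.inl i => exact hzero i
  | Sum.inr j0 =>
    by_cases h : (j0.1 : ℕ) = k - 1
    · exact hlast j0 h
    · exact hrest j0 h
end
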